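/- Let T be a D-convex left-continuous t-norm, I its residual implicator, μ_l and μ_u monotone measures on a finite nonempty set X, and R a T-equivalence relation on X. For every fuzzy set A on X, the Choquet lower approximation L(y) = ∫ I(R(x,y), A(x)) dμ_l(x) and the Choquet upper approximation U(y) = ∫ T(R(x,y), A(x)) dμ_u(x) are both granularly representable fuzzy sets. -/

import Mathlib

structure IsTNorm (T : ℝ → ℝ → ℝ) : Prop where
  maps_to : ∀ x ∈ Set.Icc (0:ℝ) 1, ∀ y ∈ Set.Icc (0:ℝ) 1, T x y ∈ Set.Icc (0:ℝ) 1
  comm : ∀ x ∈ Set.Icc (0:ℝ) 1, ∀ y ∈ Set.Icc (0:ℝ) 1, T x y = T y x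
  assoc : ∀ x ∈ Set.Icc (0:ℝ) 1, ∀ y ∈ Set.Icc (0:ℝ) 1, ∀ z ∈ Set.Icc (0:ℝ) 1,
      T (T x y) z = T x (T y z)
  mono : ∀ x₁ ∈ Set.Icc (0:ℝ) 1, ∀ x₂ ∈ Set.Icc (0:ℝ) 1, ∀ y₁ ∈ Set.Icc (0:ℝ) 1,
      ∀ y₂ ∈ Set.Icc (0:ℝ) 1, x₁ ≤ x₂ → y₁ ≤ y₂ → T x₁ y₁ ≤ T x₂ y₂
  one_left : ∀ x ∈ Set.Icc (0:ℝ) 1, T 1 x = x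

/-- `T` is left-continuous: it commutes with suprema of nonempty subsets of `[0,1]`
in each (equivalently, by commutativity, the second) argument. -/
def LeftContinuousTNorm (T : ℝ → ℝ → ℝ) : Prop :=
  ∀ x ∈ Set.Icc (0:ℝ) 1, ∀ S : Set ℝ, S.Nonempty → S ⊆ Set.Icc (0:ℝ) 1 →
    T x (sSup S) = sSup (T x '' S)

/-- The residual implicator of `T`: `I(x,y) = sup {λ ∈ [0,1] | T(x,λ) ≤ y}`. -/
noncomputable def resid (T : ℝ → ℝ → ℝ) (x y : ℝ) : ℝ :=
  sSup {l | l ∈ Set.Icc (0:ℝ) 1 ∧ T x l ≤ y}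

/-- `T` is D-convex: convex in each argument separately on `[0,1]`. -/
def DConvex (T : ℝ → ℝ → ℝ) : Prop :=
  ∀ a ∈ Set.Icc (0:ℝ) 1, ∀ b ∈ Set.Icc (0:ℝ) 1, ∀ y ∈ Set.Icc (0:ℝ) 1, ∀ w ∈ Set.Icc (0:ℝ) 1,
    T (w * a + (1 - w) * b) y ≤ w * T a y + (1 - w) * T b y ∧
    T y (w * a + (1 - w) * b) ≤ w * T y a + (1 - w) * T y b

/-- `R` is a `T`-equivalence relation: a `[0,1]`-valued reflexive, symmetric and
`T`-transitive fuzzy relation. -/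
structure IsTEquiv {X : Type*} (T : ℝ → ℝ → ℝ) (R : X → X → ℝ) : Prop where
  mem : ∀ x y, R x y ∈ Set.Icc (0:ℝ) 1
  refl : ∀ x, R x x = 1
  symm : ∀ x y, R x y = R y x
  trans : ∀ x y z, T (R x y) (R y z) ≤ R x z

/-- A monotone measure on a finite set `X`. -/
structure IsMonotoneMeasure {X : Type*} (μ : Set X → ℝ) : Prop where
  empty : μ ∅ = 0
  univ : μ Set.univ = 1
  mono : ∀ E F : Set X, E ⊆ F → μ E ≤ μ F

/-- The Choquet integral of `f : X → ℝ` w.r.t. `μ` on the finite set `X`: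
`∑ i, f(x*_i) · (μ(A*_i) − μ(A*_{i+1}))` where `x*` enumerates `X` with
`f(x*_1) ≤ … ≤ f(x*_n)` and `A*_i = {x*_i, …, x*_n}` (so `A*_{n+1} = ∅` and `μ ∅ = 0`). -/
noncomputable def choquet {X : Type*} [Fintype X] (μ : Set X → ℝ) (f : X → ℝ) : ℝ :=
  let e : Fin (Fintype.card X) ≃ X := (Fintype.equivFin X).symm
  let σ : Equiv.Perm (Fin (Fintype.card X)) := Tuple.sort (f ∘ e)
  ∑ i : Fin (Fintype.card X),
    f (e (σ i)) * (μ {x | ∃ j, i ≤ j ∧ e (σ j) = x} - μ {x | ∃ j, i < j ∧ e (σ j) = x})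

/-- `A` is granularly representable w.r.t. `T` and `R`: for every `y`,
`A(y)` is the supremum of the values `T(λ, R(x,y))` over all granules
`R_λ(x) = (z ↦ T(λ, R(x,z)))` that are (pointwise) contained in `A`. -/
def GranRep {X : Type*} (T : ℝ → ℝ → ℝ) (R : X → X → ℝ) (A : X → ℝ) : Prop :=
  ∀ y, A y = sSup {v | ∃ l ∈ Set.Icc (0:ℝ) 1, ∃ x, (∀ z, T l (R x z) ≤ A z) ∧ v = T l (R x y)}

/-!
A fuzzy set `B` is granularly representable as soon as it is `R`-extensional,
`T (R y z) (B y) ≤ B z`: the granule `T (B y) (R y ·)` then lies inside `B` and takes the value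
`B y` at `y`. By `T`-transitivity both integrands are extensional in `y`, so it suffices that
`T c` passes under the Choquet integral, `T c (∫ f dμ) ≤ ∫ g dμ` whenever `T c ∘ f ≤ g`.
Along an enumeration sorting `f`, the Choquet integral is a convex combination of the values of
`f`, so convexity of `T c` gives Jensen's inequality `T c (∫ f dμ) ≤ ∫ T c ∘ f dμ`; and the
layer-cake formula `∫ f dμ = ∫₀¹ μ {f ≥ t} dt` makes the Choquet integral monotone in `f`.
-/

open Set

section Choquet

variable {X : Type*} {n : ℕ} {μ : Set X → ℝ} {f g : X → ℝ}

def enumTail (v : Fin n → X) (k : ℕ) : Set X := {x | ∃ j : Fin n, k ≤ (j : ℕ) ∧ v j = x}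

noncomputable def choquetSum (μ : Set X → ℝ) (v : Fin n → X) (f : X → ℝ) : ℝ :=
  ∑ i : Fin n, f (v i) * (μ (enumTail v i) - μ (enumTail v (i + 1)))

lemma enumTail_zero {v : Fin n → X} (hv : Function.Surjective v) : enumTail v 0 = univ :=
  eq_univ_of_forall fun x => (hv x).imp fun _ hj => ⟨Nat.zero_le _, hj⟩

lemma enumTail_card (v : Fin n → X) : enumTail v n = ∅ :=
  eq_empty_of_forall_notMem <| by
    rintro _ ⟨j, hj, -⟩
    exact (hj.trans_lt j.isLt).false

lemma enumTail_succ_subset (v : Fin n → X) (k : ℕ) : enumTail v (k + 1) ⊆ enumTail v k :=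
  fun _ ⟨j, hj, hx⟩ => ⟨j, k.le_succ.trans hj, hx⟩

lemma sum_fin_sub_succ (g : ℕ → ℝ) : ∑ i : Fin n, (g i - g (i + 1)) = g 0 - g n := by
  rw [Fin.sum_univ_eq_sum_range (fun i => g i - g (i + 1)), Finset.sum_range_sub']

lemma enumTail_weight_nonneg (hμ : IsMonotoneMeasure μ) (v : Fin n → X) (k : ℕ) :
    0 ≤ μ (enumTail v k) - μ (enumTail v (k + 1)) :=
  sub_nonneg.mpr (hμ.mono _ _ (enumTail_succ_subset v k))

lemma sum_enumTail_weight (hμ : IsMonotoneMeasure μ) {v : Fin n → X} (hv : Function.Surjective v) :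
    ∑ i : Fin n, (μ (enumTail v i) - μ (enumTail v (i + 1))) = 1 := by
  rw [sum_fin_sub_succ (fun k => μ (enumTail v k)), enumTail_zero hv, enumTail_card, hμ.univ,
    hμ.empty, sub_zero]

/-- At level `t` the indices `i` with `t ≤ f (v i)` form a final segment, so the weights
telescope. -/
lemma sum_indicator_mul_enumTail_weight (hμ : μ ∅ = 0) {v : Fin n → X}
    (hv : Function.Surjective v) (hf : Monotone (f ∘ v)) (t : ℝ) :
    ∑ i : Fin n, {t | t ≤ f (v i)}.indicator 1 t * (μ (enumTail v i) - μ (enumTail v (i + 1)))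
      = μ {x | t ≤ f x} := by
  set L := {x | t ≤ f x}
  have hterm : ∀ i : Fin n,
      {t | t ≤ f (v i)}.indicator 1 t * (μ (enumTail v i) - μ (enumTail v (i + 1)))
      = μ (L ∩ enumTail v i) - μ (L ∩ enumTail v (i + 1)) := by
    intro i
    by_cases hti : t ≤ f (v i)
    · have hsub : ∀ k : ℕ, (i : ℕ) ≤ k → enumTail v k ⊆ L := fun k hk x ⟨j, hj, hx⟩ =>
        hx ▸ hti.trans (hf (Fin.le_def.mpr (hk.trans hj)))
      rw [indicator_of_mem (show t ∈ {t | t ≤ f (v i)} from hti), Pi.one_apply, one_mul,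
        inter_eq_right.mpr (hsub _ le_rfl), inter_eq_right.mpr (hsub _ (Nat.le_succ _))]
    · have heq : L ∩ enumTail v i = L ∩ enumTail v (i + 1) := by
        refine Subset.antisymm (fun x ⟨hxL, j, hj, hx⟩ => ⟨hxL, j, ?_, hx⟩)
          (inter_subset_inter_right _ (enumTail_succ_subset v i))
        refine Nat.succ_le_of_lt (lt_of_le_of_ne hj fun hij => hti ?_)
        rw [Fin.ext (hij : (i : ℕ) = j), hx]
        exact hxL
      rw [indicator_of_notMem (show t ∉ {t | t ≤ f (v i)} from hti), zero_mul, heq, sub_self]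
  rw [Finset.sum_congr rfl fun i _ => hterm i, sum_fin_sub_succ (fun k => μ (L ∩ enumTail v k)),
    enumTail_zero hv, enumTail_card, inter_univ, inter_empty, hμ, sub_zero]

lemma intervalIntegral_indicator_Iic_one {a : ℝ} (ha : a ∈ Icc (0 : ℝ) 1) :
    ∫ t in (0 : ℝ)..1, {t | t ≤ a}.indicator 1 t = a := by
  rw [intervalIntegral.integral_indicator ha]
  simp

/-- The layer-cake formula: write `f (v i) = ∫₀¹ 1[t ≤ f (v i)] dt` and sum under the integral. -/
lemma choquetSum_eq_integral (hμ : μ ∅ = 0) {v : Fin n → X} (hv : Function.Surjective v)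
    (hf : ∀ x, f x ∈ Icc (0 : ℝ) 1) (hmono : Monotone (f ∘ v)) :
    choquetSum μ v f = ∫ t in (0 : ℝ)..1, μ {x | t ≤ f x} := by
  have hint : ∀ i : Fin n, IntervalIntegrable
      (fun t => {t | t ≤ f (v i)}.indicator 1 t * (μ (enumTail v i) - μ (enumTail v (i + 1))))
      MeasureTheory.volume 0 1 := fun i =>
    IntervalIntegrable.mul_const ⟨(intervalIntegrable_const (c := (1 : ℝ))).1.indicator
      measurableSet_Iic, (intervalIntegrable_const (c := (1 : ℝ))).2.indicator measurableSet_Iic⟩ _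
  calc choquetSum μ v f
      = ∑ i : Fin n, ∫ t in (0 : ℝ)..1,
          {t | t ≤ f (v i)}.indicator 1 t * (μ (enumTail v i) - μ (enumTail v (i + 1))) := by
        refine Finset.sum_congr rfl fun i _ => ?_
        rw [intervalIntegral.integral_mul_const, intervalIntegral_indicator_Iic_one (hf _)]
    _ = ∫ t in (0 : ℝ)..1, μ {x | t ≤ f x} := by
        rw [← intervalIntegral.integral_finsetSum fun i _ => hint i]
        simp_rw [sum_indicator_mul_enumTail_weight hμ hv hmono]

lemma map_choquetSum_le (hμ : IsMonotoneMeasure μ) {v : Fin n → X} (hv : Function.Surjective v)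
    {φ : ℝ → ℝ} (hφ : ConvexOn ℝ (Icc 0 1) φ) (hf : ∀ x, f x ∈ Icc (0 : ℝ) 1) :
    φ (choquetSum μ v f) ≤ choquetSum μ v (φ ∘ f) := by
  simp_rw [choquetSum, Function.comp_apply, mul_comm (f _), mul_comm (φ _), ← smul_eq_mul]
  exact hφ.map_sum_le (fun i _ => enumTail_weight_nonneg hμ v i) (sum_enumTail_weight hμ hv)
    fun i _ => hf _

lemma choquetSum_mem (hμ : IsMonotoneMeasure μ) {v : Fin n → X} (hv : Function.Surjective v)
    (hf : ∀ x, f x ∈ Icc (0 : ℝ) 1) : choquetSum μ v f ∈ Icc (0 : ℝ) 1 := by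
  simp_rw [choquetSum, mul_comm (f _), ← smul_eq_mul]
  exact (convex_Icc 0 1).sum_mem (fun i _ => enumTail_weight_nonneg hμ v i)
    (sum_enumTail_weight hμ hv) fun i _ => hf _

variable [Fintype X]

noncomputable def choquetEnum (f : X → ℝ) : Fin (Fintype.card X) → X :=
  (Fintype.equivFin X).symm ∘ Tuple.sort (f ∘ (Fintype.equivFin X).symm)

lemma choquetEnum_surjective (f : X → ℝ) : Function.Surjective (choquetEnum f) :=
  (Fintype.equivFin X).symm.surjective.comp (Equiv.surjective _)

lemma monotone_comp_choquetEnum (f : X → ℝ) : Monotone (f ∘ choquetEnum f) :=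
  Tuple.monotone_sort (f ∘ (Fintype.equivFin X).symm)

lemma choquet_eq_choquetSum (μ : Set X → ℝ) (f : X → ℝ) :
    choquet μ f = choquetSum μ (choquetEnum f) f :=
  rfl

lemma choquet_mem (hμ : IsMonotoneMeasure μ) (hf : ∀ x, f x ∈ Icc (0 : ℝ) 1) :
    choquet μ f ∈ Icc (0 : ℝ) 1 :=
  choquetSum_mem hμ (choquetEnum_surjective f) hf

lemma choquet_eq_integral (hμ : μ ∅ = 0) (hf : ∀ x, f x ∈ Icc (0 : ℝ) 1) :
    choquet μ f = ∫ t in (0 : ℝ)..1, μ {x | t ≤ f x} :=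
  choquetSum_eq_integral hμ (choquetEnum_surjective f) hf (monotone_comp_choquetEnum f)

lemma choquet_mono (hμ : IsMonotoneMeasure μ) (hf : ∀ x, f x ∈ Icc (0 : ℝ) 1)
    (hg : ∀ x, g x ∈ Icc (0 : ℝ) 1) (hfg : f ≤ g) : choquet μ f ≤ choquet μ g := by
  have hanti : ∀ h : X → ℝ, Antitone fun t : ℝ => μ {x | t ≤ h x} := fun h s t hst =>
    hμ.mono _ _ fun x hx => hst.trans hx
  rw [choquet_eq_integral hμ.empty hf, choquet_eq_integral hμ.empty hg]
  exact intervalIntegral.integral_mono_on zero_le_one (hanti f).intervalIntegrable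
    (hanti g).intervalIntegrable fun t _ => hμ.mono _ _ fun x hx => hx.trans (hfg x)

/-- Monotonicity of `φ` makes the enumeration sorting `f` also sort `φ ∘ f`, so both sides are
computed with the same weights. -/
lemma map_choquet_le (hμ : IsMonotoneMeasure μ) {φ : ℝ → ℝ}
    (hconv : ConvexOn ℝ (Icc 0 1) φ) (hmono : MonotoneOn φ (Icc 0 1))
    (hmaps : MapsTo φ (Icc 0 1) (Icc 0 1)) (hf : ∀ x, f x ∈ Icc (0 : ℝ) 1) :
    φ (choquet μ f) ≤ choquet μ (φ ∘ f) := by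
  have hφf : ∀ x, (φ ∘ f) x ∈ Icc (0 : ℝ) 1 := fun x => hmaps (hf x)
  rw [choquet_eq_choquetSum]
  refine (map_choquetSum_le hμ (choquetEnum_surjective f) hconv hf).trans_eq ?_
  rw [choquetSum_eq_integral hμ.empty (choquetEnum_surjective f) hφf
      fun i j hij => hmono (hf _) (hf _) (monotone_comp_choquetEnum f hij),
    choquet_eq_integral hμ.empty hφf]

end Choquet

section TNorm

variable {T : ℝ → ℝ → ℝ} {a c x y : ℝ}

namespace IsTNorm

lemma mono_right (hT : IsTNorm T) (hc : c ∈ Icc (0 : ℝ) 1) (hx : x ∈ Icc (0 : ℝ) 1)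
    (hy : y ∈ Icc (0 : ℝ) 1) (hxy : x ≤ y) : T c x ≤ T c y :=
  hT.mono c hc c hc x hx y hy le_rfl hxy

lemma apply_zero_right (hT : IsTNorm T) (hx : x ∈ Icc (0 : ℝ) 1) : T x 0 = 0 := by
  have h01 : (0 : ℝ) ∈ Icc (0 : ℝ) 1 := left_mem_Icc.mpr zero_le_one
  refine le_antisymm ?_ (hT.maps_to x hx 0 h01).1
  calc T x 0 ≤ T 1 0 := hT.mono x hx 1 (right_mem_Icc.mpr zero_le_one) 0 h01 0 h01 hx.2 le_rfl
    _ = 0 := hT.one_left 0 h01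

lemma apply_one_right (hT : IsTNorm T) (hx : x ∈ Icc (0 : ℝ) 1) : T x 1 = x := by
  rw [hT.comm x hx 1 (right_mem_Icc.mpr zero_le_one), hT.one_left x hx]

end IsTNorm

lemma DConvex.convexOn_right (hT : DConvex T) (hc : c ∈ Icc (0 : ℝ) 1) :
    ConvexOn ℝ (Icc 0 1) (T c) := by
  refine ⟨convex_Icc 0 1, fun x hx y hy w u hw hu hwu => ?_⟩
  obtain rfl : u = 1 - w := by linarith
  simpa only [smul_eq_mul] using (hT x hx y hy c hc w ⟨hw, by linarith⟩).2

lemma le_resid (hl : a ∈ Icc (0 : ℝ) 1) (h : T x a ≤ y) : a ≤ resid T x y :=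
  le_csSup ⟨1, fun _ hl => hl.1.2⟩ ⟨hl, h⟩

lemma resid_mem (hT : IsTNorm T) (hx : x ∈ Icc (0 : ℝ) 1) (hy : 0 ≤ y) :
    resid T x y ∈ Icc (0 : ℝ) 1 := by
  have h0 : (0 : ℝ) ∈ {l | l ∈ Icc (0 : ℝ) 1 ∧ T x l ≤ y} :=
    ⟨left_mem_Icc.mpr zero_le_one, (hT.apply_zero_right hx).trans_le hy⟩
  exact ⟨le_csSup ⟨1, fun _ hl => hl.1.2⟩ h0, csSup_le ⟨0, h0⟩ fun _ hl => hl.1.2⟩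

/-- Left-continuity is what makes the supremum defining `resid` attained. -/
lemma apply_resid_le (hT : IsTNorm T) (hTlc : LeftContinuousTNorm T) (hx : x ∈ Icc (0 : ℝ) 1)
    (hy : 0 ≤ y) : T x (resid T x y) ≤ y := by
  have hne : {l | l ∈ Icc (0 : ℝ) 1 ∧ T x l ≤ y}.Nonempty :=
    ⟨0, left_mem_Icc.mpr zero_le_one, (hT.apply_zero_right hx).trans_le hy⟩
  rw [resid, hTlc x hx _ hne fun _ hl => hl.1]
  exact csSup_le (hne.image _) <| by
    rintro _ ⟨l, hl, rfl⟩
    exact hl.2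

variable {X : Type*} {R : X → X → ℝ}

lemma IsTEquiv.apply_resid_le_resid (hT : IsTNorm T) (hTlc : LeftContinuousTNorm T)
    (hR : IsTEquiv T R) (ha : 0 ≤ a) (x y z : X) :
    T (R y z) (resid T (R x y) a) ≤ resid T (R x z) a := by
  have hI := resid_mem hT (hR.mem x y) ha
  refine le_resid (hT.maps_to _ (hR.mem y z) _ hI) ?_
  calc T (R x z) (T (R y z) (resid T (R x y) a))
      = T (T (R x z) (R z y)) (resid T (R x y) a) := by
        rw [hR.symm z y, hT.assoc _ (hR.mem x z) _ (hR.mem y z) _ hI]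
    _ ≤ T (R x y) (resid T (R x y) a) :=
        hT.mono _ (hT.maps_to _ (hR.mem x z) _ (hR.mem z y)) _ (hR.mem x y) _ hI _ hI
          (hR.trans x z y) le_rfl
    _ ≤ a := apply_resid_le hT hTlc (hR.mem x y) ha

lemma IsTEquiv.apply_apply_le_apply (hT : IsTNorm T) (hR : IsTEquiv T R)
    (ha : a ∈ Icc (0 : ℝ) 1) (x y z : X) : T (R y z) (T (R x y) a) ≤ T (R x z) a := by
  calc T (R y z) (T (R x y) a) = T (T (R x y) (R y z)) a := by
        rw [← hT.assoc _ (hR.mem y z) _ (hR.mem x y) _ ha, hT.comm _ (hR.mem y z) _ (hR.mem x y)]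
    _ ≤ T (R x z) a :=
        hT.mono _ (hT.maps_to _ (hR.mem x y) _ (hR.mem y z)) _ (hR.mem x z) _ ha _ ha
          (hR.trans x y z) le_rfl

lemma granRep_of_extensional (hT : IsTNorm T) (hR : IsTEquiv T R) {B : X → ℝ}
    (hB : ∀ y, B y ∈ Icc (0 : ℝ) 1) (hext : ∀ y z, T (R y z) (B y) ≤ B z) : GranRep T R B := by
  intro y
  have hub : ∀ v ∈ {v | ∃ l ∈ Icc (0 : ℝ) 1, ∃ x, (∀ z, T l (R x z) ≤ B z) ∧ v = T l (R x y)},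
      v ≤ B y := by
    rintro _ ⟨l, -, x, hx, rfl⟩
    exact hx y
  have hmem : B y ∈ {v | ∃ l ∈ Icc (0 : ℝ) 1, ∃ x, (∀ z, T l (R x z) ≤ B z) ∧ v = T l (R x y)} :=
    ⟨B y, hB y, y, fun z => (hT.comm _ (hB y) _ (hR.mem y z)).trans_le (hext y z),
      by rw [hR.refl, hT.apply_one_right (hB y)]⟩
  exact le_antisymm (le_csSup ⟨B y, hub⟩ hmem) (csSup_le ⟨_, hmem⟩ hub)

lemma granRep_choquet [Fintype X] (hT : IsTNorm T) (hTconv : DConvex T) (hR : IsTEquiv T R)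
    {μ : Set X → ℝ} (hμ : IsMonotoneMeasure μ) {F : X → X → ℝ} (hF : ∀ x y, F x y ∈ Icc (0 : ℝ) 1)
    (hFext : ∀ x y z, T (R y z) (F x y) ≤ F x z) : GranRep T R fun y => choquet μ (F · y) := by
  refine granRep_of_extensional hT hR (fun y => choquet_mem hμ (hF · y)) fun y z => ?_
  have hc := hR.mem y z
  exact (map_choquet_le hμ (hTconv.convexOn_right hc)
    (fun _ ha _ hb => hT.mono_right hc ha hb) (fun a ha => hT.maps_to _ hc a ha)
    (hF · y)).trans (choquet_mono hμ (fun x => hT.maps_to _ hc _ (hF x y)) (hF · z) (hFext · y z))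

end TNorm

theorem stmt7_general {X : Type*} [Fintype X]
    (T : ℝ → ℝ → ℝ) (hT : IsTNorm T) (hTlc : LeftContinuousTNorm T) (hTconv : DConvex T)
    (μl μu : Set X → ℝ) (hμl : IsMonotoneMeasure μl) (hμu : IsMonotoneMeasure μu)
    (R : X → X → ℝ) (hR : IsTEquiv T R)
    (A : X → ℝ) (hA : ∀ x, A x ∈ Set.Icc (0:ℝ) 1) :
    GranRep T R (fun y => choquet μl (fun x => resid T (R x y) (A x))) ∧
    GranRep T R (fun y => choquet μu (fun x => T (R x y) (A x))) :=
  ⟨granRep_choquet hT hTconv hR hμl (fun x y => resid_mem hT (hR.mem x y) (hA x).1)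
      fun x => hR.apply_resid_le_resid hT hTlc (hA x).1 x,
    granRep_choquet hT hTconv hR hμu (fun x y => hT.maps_to _ (hR.mem x y) _ (hA x))
      fun x => hR.apply_apply_le_apply hT (hA x) x⟩

/-- the Choquet lower and upper approximations are granularly representable. -/
theorem stmt7 {X : Type*} [Fintype X] [Nonempty X]
    (T : ℝ → ℝ → ℝ) (hT : IsTNorm T) (hTlc : LeftContinuousTNorm T) (hTconv : DConvex T)
    (μl μu : Set X → ℝ) (hμl : IsMonotoneMeasure μl) (hμu : IsMonotoneMeasure μu)
    (R : X → X → ℝ) (hR : IsTEquiv T R)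
    (A : X → ℝ) (hA : ∀ x, A x ∈ Set.Icc (0:ℝ) 1) :
    GranRep T R (fun y => choquet μl (fun x => resid T (R x y) (A x))) ∧
    GranRep T R (fun y => choquet μu (fun x => T (R x y) (A x))) :=
  stmt7_general T hT hTlc hTconv μl μu hμl hμu R hR A hA
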